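/- arXiv:1001.3752 — 7 statements merged into one kernel-verified Lean document; each statement's English description precedes it below -/
import Mathlib

section
/- Let n ≥ 1 and let G be a finite simple graph on the 2n distinct vertices x_1,…,x_n,y_1,…,y_n that is bipartite with bipartition (V, W), where V = {x_1,…,x_n} and W = {y_1,…,y_n}, such that {x_i, y_i} is an edge of G for every i and such that whenever {x_i, y_j} is an edge of G one has i ≤ j. Then for each i = 0,…,n the set F_i = {y_1,…,y_i, x_{i+1},…,x_n} is a maximal independent set of G, F_0 = V, F_n = W, and |F_i ∩ F_{i+1}| = n − 1 for every i = 0,…,n−1. -/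
/-- A set of vertices is independent if no two of its elements are adjacent. -/
def IndepSet {α : Type*} (G : SimpleGraph α) (S : Finset α) : Prop :=
  ∀ ⦃u⦄, u ∈ S → ∀ ⦃v⦄, v ∈ S → ¬ G.Adj u v

/-- A maximal independent set: an independent set not properly contained in any
other independent set. -/
def MaxIndepSet {α : Type*} (G : SimpleGraph α) (S : Finset α) : Prop :=
  IndepSet G S ∧ ∀ ⦃T : Finset α⦄, IndepSet G T → S ⊆ T → T = S

/-- `(V, W)` is a bipartition of `G`: the vertex set is the disjoint union of `V` and `W`
and every edge joins a vertex of `V` to a vertex of `W`. -/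
def IsBipartition {α : Type*} [Fintype α] [DecidableEq α] (G : SimpleGraph α) (V W : Finset α) : Prop :=
  Disjoint V W ∧ V ∪ W = Finset.univ ∧
    ∀ ⦃u v⦄, G.Adj u v → (u ∈ V ∧ v ∈ W) ∨ (u ∈ W ∧ v ∈ V)

/-!
Since every edge `{xᵢ, yⱼ}` has `i ≤ j`, no edge joins `y₁,…,yᵢ` to `x_{i+1},…,xₙ`, and the
bipartition rules out edges inside either list, so `Fᵢ` is independent. It is maximal because
each vertex outside `Fᵢ` is matched by an edge `{xₜ, yₜ}` to a vertex inside it. Passing from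
`Fᵢ` to `F_{i+1}` trades `x_{i+1}` for `y_{i+1}`, which leaves `n - 1` common vertices.
-/

open Finset

theorem IsBipartition.not_adj_of_mem_left {α : Type*} [Fintype α] [DecidableEq α]
    {G : SimpleGraph α} {V W : Finset α} (h : IsBipartition G V W) {u v : α}
    (hu : u ∈ V) (hv : v ∈ V) : ¬ G.Adj u v := fun huv => by
  rcases h.2.2 huv with ⟨_, hvW⟩ | ⟨huW, _⟩
  · exact disjoint_left.mp h.1 hv hvW
  · exact disjoint_left.mp h.1 hu huW

theorem IsBipartition.not_adj_of_mem_right {α : Type*} [Fintype α] [DecidableEq α]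
    {G : SimpleGraph α} {V W : Finset α} (h : IsBipartition G V W) {u v : α}
    (hu : u ∈ W) (hv : v ∈ W) : ¬ G.Adj u v := fun huv => by
  rcases h.2.2 huv with ⟨huV, _⟩ | ⟨_, hvV⟩
  · exact disjoint_left.mp h.1 huV hu
  · exact disjoint_left.mp h.1 hvV hv

theorem maxIndepSet_of_forall_exists_adj {α : Type*} {G : SimpleGraph α} {S : Finset α}
    (hS : IndepSet G S) (hdom : ∀ v ∉ S, ∃ u ∈ S, G.Adj u v) : MaxIndepSet G S := by
  refine ⟨hS, fun T hT hST => ?_⟩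
  by_contra hne
  obtain ⟨v, hvT, hvS⟩ := exists_of_ssubset (hST.lt_of_ne (Ne.symm hne))
  obtain ⟨u, huS, huv⟩ := hdom v hvS
  exact hT (hST huS) hvT huv

section ChainSet

variable {α : Type*} [DecidableEq α] {n : ℕ} (x y : Fin n → α)

/-- The set `Fᵢ = {y₁,…,yᵢ, x_{i+1},…,xₙ}`, with the labels shifted to `Fin n = {0,…,n-1}`. -/
def chainSet (i : ℕ) : Finset α :=
  (univ.filter (fun t : Fin n => (t : ℕ) < i)).image y ∪
    (univ.filter (fun t : Fin n => i ≤ (t : ℕ))).image x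

variable {x y}

theorem mem_chainSet {i : ℕ} {v : α} :
    v ∈ chainSet x y i ↔ (∃ a : Fin n, (a : ℕ) < i ∧ y a = v) ∨
      ∃ a : Fin n, i ≤ (a : ℕ) ∧ x a = v := by
  simp [chainSet]

theorem chainSet_zero : chainSet x y 0 = univ.image x := by
  simp [chainSet]

theorem chainSet_self : chainSet x y n = univ.image y := by
  have hnone : univ.filter (fun t : Fin n => n ≤ (t : ℕ)) = ∅ := by
    ext t; simp [t.isLt]
  simp [chainSet, hnone]

theorem indepSet_chainSet {G : SimpleGraph α} (hxx : ∀ a b, ¬ G.Adj (x a) (x b))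
    (hyy : ∀ a b, ¬ G.Adj (y a) (y b)) (hle : ∀ a b, G.Adj (x a) (y b) → (a : ℕ) ≤ b)
    (i : ℕ) : IndepSet G (chainSet x y i) := by
  intro u hu v hv huv
  rw [mem_chainSet] at hu hv
  rcases hu with ⟨a, ha, rfl⟩ | ⟨a, ha, rfl⟩ <;> rcases hv with ⟨b, hb, rfl⟩ | ⟨b, hb, rfl⟩
  · exact hyy a b huv
  · exact absurd (hle b a huv.symm) (by omega)
  · exact absurd (hle a b huv) (by omega)
  · exact hxx a b huv

theorem exists_adj_of_notMem_chainSet {G : SimpleGraph α}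
    (hcover : ∀ v, (∃ a, x a = v) ∨ ∃ a, y a = v) (hmatch : ∀ a, G.Adj (x a) (y a))
    {i : ℕ} {v : α} (hv : v ∉ chainSet x y i) : ∃ u ∈ chainSet x y i, G.Adj u v := by
  simp only [mem_chainSet, not_or, not_exists, not_and] at hv
  rcases hcover v with ⟨a, rfl⟩ | ⟨a, rfl⟩
  · have ha : (a : ℕ) < i := by by_contra h; exact hv.2 a (by omega) rfl
    exact ⟨y a, mem_chainSet.mpr (Or.inl ⟨a, ha, rfl⟩), (hmatch a).symm⟩
  · have ha : i ≤ (a : ℕ) := by by_contra h; exact hv.1 a (by omega) rfl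
    exact ⟨x a, mem_chainSet.mpr (Or.inr ⟨a, ha, rfl⟩), hmatch a⟩

theorem chainSet_inter_succ (hxy : ∀ a b, x a ≠ y b) {i : ℕ} (hi : i < n) :
    chainSet x y i ∩ chainSet x y (i + 1) = (Iio ⟨i, hi⟩).image y ∪ (Ioi ⟨i, hi⟩).image x := by
  ext v
  simp only [mem_inter, mem_chainSet, mem_union, mem_image, mem_Iio, mem_Ioi, Fin.lt_def]
  constructor
  · rintro ⟨⟨a, ha, rfl⟩ | ⟨a, ha, rfl⟩, ⟨b, hb, hba⟩ | ⟨b, hb, hba⟩⟩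
    · exact Or.inl ⟨a, ha, rfl⟩
    · exact Or.inl ⟨a, ha, rfl⟩
    · exact absurd hba.symm (hxy a b)
    · exact Or.inr ⟨b, hb, hba⟩
  · rintro (⟨a, ha, rfl⟩ | ⟨a, ha, rfl⟩)
    · exact ⟨Or.inl ⟨a, ha, rfl⟩, Or.inl ⟨a, by omega, rfl⟩⟩
    · exact ⟨Or.inr ⟨a, by omega, rfl⟩, Or.inr ⟨a, ha, rfl⟩⟩

theorem card_chainSet_inter_succ (hx : Function.Injective x) (hy : Function.Injective y)
    (hxy : ∀ a b, x a ≠ y b) {i : ℕ} (hi : i < n) :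
    #(chainSet x y i ∩ chainSet x y (i + 1)) = n - 1 := by
  have hdisj : Disjoint ((Iio ⟨i, hi⟩).image y) ((Ioi (⟨i, hi⟩ : Fin n)).image x) := by
    simp only [disjoint_left, mem_image, not_exists, not_and]
    rintro _ ⟨a, _, rfl⟩ b _ hba
    exact hxy b a hba
  rw [chainSet_inter_succ hxy hi, card_union_of_disjoint hdisj, card_image_of_injective _ hy,
    card_image_of_injective _ hx, Fin.card_Iio, Fin.card_Ioi]
  omega

end ChainSet

theorem bipartite_chain_of_labeling_general {α : Type*} [Fintype α] [DecidableEq α]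
    (n : ℕ) (G : SimpleGraph α) (x y : Fin n → α)
    (hx : Function.Injective x) (hy : Function.Injective y)
    (hbip : IsBipartition G (Finset.univ.image x) (Finset.univ.image y))
    (hmatch : ∀ i, G.Adj (x i) (y i))
    (hle : ∀ i j, G.Adj (x i) (y j) → (i : ℕ) ≤ (j : ℕ))
    (F : ℕ → Finset α)
    (hF : ∀ i, F i =
      ((Finset.univ.filter (fun t : Fin n => (t : ℕ) < i)).image y) ∪
      ((Finset.univ.filter (fun t : Fin n => i ≤ (t : ℕ))).image x)) :
    (∀ i ≤ n, MaxIndepSet G (F i)) ∧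
    F 0 = Finset.univ.image x ∧
    F n = Finset.univ.image y ∧
    ∀ i < n, (F i ∩ F (i + 1)).card = n - 1 := by
  obtain rfl : F = chainSet x y := funext hF
  have hxx : ∀ a b, ¬ G.Adj (x a) (x b) := fun a b =>
    hbip.not_adj_of_mem_left (mem_image_of_mem x (mem_univ a)) (mem_image_of_mem x (mem_univ b))
  have hyy : ∀ a b, ¬ G.Adj (y a) (y b) := fun a b =>
    hbip.not_adj_of_mem_right (mem_image_of_mem y (mem_univ a)) (mem_image_of_mem y (mem_univ b))
  have hxy : ∀ a b, x a ≠ y b := fun a b hab => disjoint_left.mp hbip.1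
    (mem_image_of_mem x (mem_univ a)) (hab ▸ mem_image_of_mem y (mem_univ b))
  have hcover : ∀ v, (∃ a, x a = v) ∨ ∃ a, y a = v := fun v => by
    have hv : v ∈ univ.image x ∪ univ.image y := hbip.2.1 ▸ mem_univ v
    simpa using hv
  refine ⟨fun i _ => ?_, chainSet_zero, chainSet_self,
    fun i hi => card_chainSet_inter_succ hx hy hxy hi⟩
  exact maxIndepSet_of_forall_exists_adj (indepSet_chainSet hxx hyy hle i)
    fun v hv => exists_adj_of_notMem_chainSet hcover hmatch hv

/-- Proposition 1.1, (b) ⇒ (a): if `G` is bipartite on `x₁,…,xₙ,y₁,…,yₙ` with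
`{xᵢ,yᵢ}` an edge for every `i`, and `{xᵢ,yⱼ}` an edge implies `i ≤ j`, then the sets
`Fᵢ = {y₁,…,yᵢ,x_{i+1},…,xₙ}` are maximal independent sets with `F₀ = V`, `Fₙ = W`,
and `|Fᵢ ∩ F_{i+1}| = n - 1`. -/
theorem bipartite_chain_of_labeling {α : Type*} [Fintype α] [DecidableEq α]
    (n : ℕ) (hn : 1 ≤ n) (G : SimpleGraph α) (x y : Fin n → α)
    (hx : Function.Injective x) (hy : Function.Injective y)
    (hxy : ∀ i j, x i ≠ y j)
    (hbip : IsBipartition G (Finset.univ.image x) (Finset.univ.image y))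
    (hmatch : ∀ i, G.Adj (x i) (y i))
    (hle : ∀ i j, G.Adj (x i) (y j) → (i : ℕ) ≤ (j : ℕ))
    (F : ℕ → Finset α)
    (hF : ∀ i, F i =
      ((Finset.univ.filter (fun t : Fin n => (t : ℕ) < i)).image y) ∪
      ((Finset.univ.filter (fun t : Fin n => i ≤ (t : ℕ))).image x)) :
    (∀ i ≤ n, MaxIndepSet G (F i)) ∧
    F 0 = Finset.univ.image x ∧
    F n = Finset.univ.image y ∧
    ∀ i < n, (F i ∩ F (i + 1)).card = n - 1 :=
  bipartite_chain_of_labeling_general n G x y hx hy hbip hmatch hle F hF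
end

section
/- Let n ≥ 1 and let G be a finite simple graph on the 2n distinct vertices x_1,…,x_n,y_1,…,y_n that is bipartite with bipartition (V, W), where V = {x_1,…,x_n} and W = {y_1,…,y_n}, such that {x_i, y_i} is an edge of G for every i, and assume G is unmixed. Suppose there exist maximal independent sets F_0 = V, F_1, …, F_n = W of G with |F_i ∩ F_{i+1}| = n − 1 for every i = 0,…,n−1. Then there is a permutation σ of {1,…,n} such that F_i = {y_{σ(1)},…,y_{σ(i)}, x_{σ(i+1)},…,x_{σ(n)}} for every i = 0,…,n; consequently, whenever {x_{σ(i)}, y_{σ(j)}} is an edge of G one has i ≤ j. -/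
/-- `G` is unmixed if all maximal independent sets have the same cardinality. -/
def Unmixed {α : Type*} (G : SimpleGraph α) : Prop :=
  ∀ ⦃S T : Finset α⦄, MaxIndepSet G S → MaxIndepSet G T → S.card = T.card

/-!
Each `F k` is independent and, by unmixedness, has `n = #V` elements. Since it contains at most
one endpoint of each edge `{x t, y t}` and every vertex is some `x t` or `y t`, it contains exactly
one, so `F k` is determined by the set `S k` of indices `t` with `y t ∈ F k`. The intersection
condition says that consecutive `S k` differ in at most one index; going from `S 0 = ∅` to
`S n = univ` in `n` such steps forces every step to add exactly one new index `σ k`. An edge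
`{x (σ i), y (σ j)}` with `j < i` would then lie inside the independent set `F (j + 1)`.
-/

open Finset

theorem eq_self_of_le_add_one {a : ℕ → ℕ} {n : ℕ} (h0 : a 0 = 0) (hn : n ≤ a n)
    (hstep : ∀ k < n, a (k + 1) ≤ a k + 1) {k : ℕ} (hk : k ≤ n) : a k = k := by
  have hup : ∀ k ≤ n, a k ≤ k := by
    intro k hk
    induction k with
    | zero => simp [h0]
    | succ k ih => have := hstep k hk; have := ih (by omega); omega
  have hdown : ∀ d ≤ n, a n ≤ a (n - d) + d := by
    intro d hd
    induction d with
    | zero => simp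
    | succ d ih =>
      have := hstep (n - (d + 1)) (by omega)
      rw [show n - (d + 1) + 1 = n - d by omega] at this
      have := ih (by omega)
      omega
  have := hup k hk
  have := hdown (n - k) (by omega)
  rw [Nat.sub_sub_self hk] at this
  omega

section Chain

variable {β : Type*} [Fintype β] [DecidableEq β] {n : ℕ} {S : ℕ → Finset β}

theorem Finset.exists_equiv_of_subset_succ (hsub : ∀ k < n, S k ⊆ S (k + 1))
    (hcard : ∀ k ≤ n, #(S k) = k) (hn : S n = univ) :
    ∃ σ : Fin n ≃ β, ∀ i ≤ n, S i = (univ.filter fun t : Fin n => (t : ℕ) < i).image σ := by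
  have hmono : MonotoneOn S (Set.Iic n) :=
    monotoneOn_of_le_succ Set.ordConnected_Iic fun k _ _ hk => hsub k (Order.succ_le_iff.mp hk)
  have hnew (t : Fin n) : ∃ b, S (t + 1) \ S t = {b} := by
    rw [← card_eq_one, card_sdiff_of_subset (hsub t t.isLt), hcard _ t.isLt, hcard _ t.isLt.le]
    omega
  choose σ hσ using hnew
  have hmem (t : Fin n) {i : ℕ} (hi : i ≤ n) : σ t ∈ S i ↔ (t : ℕ) < i := by
    have hσt := (hσ t).ge (mem_singleton_self _)
    rw [mem_sdiff] at hσt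
    constructor
    · intro h
      by_contra! hle
      exact hσt.2 (hmono (Set.mem_Iic.mpr hi) (Set.mem_Iic.mpr t.isLt.le) hle h)
    · intro hlt
      exact hmono (Set.mem_Iic.mpr t.isLt) (Set.mem_Iic.mpr hi) hlt hσt.1
  have hinj : Function.Injective σ := by
    intro a b hab
    have key {i : ℕ} (hi : i ≤ n) : (a : ℕ) < i ↔ (b : ℕ) < i := by
      rw [← hmem a hi, ← hmem b hi, hab]
    have := (key a.isLt).mp (by omega)
    have := (key b.isLt).mpr (by omega)
    ext
    omega
  have hcardβ : Fintype.card β = n := by rw [← card_univ, ← hn, hcard n le_rfl]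
  let e : Fin n ≃ β := Equiv.ofBijective σ
    ((Fintype.bijective_iff_injective_and_card σ).mpr ⟨hinj, by simp [hcardβ]⟩)
  refine ⟨e, fun i hi => ?_⟩
  ext b
  obtain ⟨t, rfl⟩ := e.surjective b
  simp [e, hmem t hi, hinj.eq_iff]

theorem Finset.exists_equiv_of_chain (hβ : Fintype.card β = n) (h0 : S 0 = ∅) (hn : S n = univ)
    (hstep : ∀ k < n, #(S k ∪ S (k + 1)) ≤ #(S k ∩ S (k + 1)) + 1) :
    ∃ σ : Fin n ≃ β, ∀ i ≤ n, S i = (univ.filter fun t : Fin n => (t : ℕ) < i).image σ := by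
  have hgrow (k : ℕ) (hk : k < n) : #(S (k + 1)) ≤ #(S k) + 1 :=
    calc #(S (k + 1)) ≤ #(S k ∪ S (k + 1)) := card_le_card subset_union_right
      _ ≤ #(S k ∩ S (k + 1)) + 1 := hstep k hk
      _ ≤ #(S k) + 1 := by gcongr; exact inter_subset_left
  have hcard (k : ℕ) (hk : k ≤ n) : #(S k) = k :=
    eq_self_of_le_add_one (a := fun k => #(S k)) (by simp [h0]) (by simp [hn, hβ]) hgrow hk
  refine exists_equiv_of_subset_succ (fun k hk => ?_) hcard hn
  have hinter : #(S k) + 1 ≤ #(S k ∩ S (k + 1)) + 1 :=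
    calc #(S k) + 1 = #(S (k + 1)) := by rw [hcard k hk.le, hcard (k + 1) hk]
      _ ≤ #(S k ∪ S (k + 1)) := card_le_card subset_union_right
      _ ≤ #(S k ∩ S (k + 1)) + 1 := hstep k hk
  exact inter_eq_left.mp (eq_of_subset_of_card_le inter_subset_left (by omega))

end Chain

section MixedSet

variable {ι α : Type*} [Fintype ι] [DecidableEq ι] [DecidableEq α] {x y : ι → α}

def mixedSet (x y : ι → α) (S : Finset ι) : Finset α :=
  S.image y ∪ Sᶜ.image x

theorem card_mixedSet_le (S : Finset ι) : #(mixedSet x y S) ≤ Fintype.card ι :=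
  calc #(mixedSet x y S) ≤ #(S.image y) + #(Sᶜ.image x) := card_union_le _ _
    _ ≤ #S + #Sᶜ := add_le_add card_image_le card_image_le
    _ = Fintype.card ι := card_add_card_compl S

theorem IndepSet.eq_mixedSet {G : SimpleGraph α} {F : Finset α} (hF : IndepSet G F)
    (hcover : ∀ u, (∃ i, x i = u) ∨ ∃ i, y i = u) (hmatch : ∀ i, G.Adj (x i) (y i))
    (hcard : Fintype.card ι ≤ #F) : F = mixedSet x y {t | y t ∈ F} := by
  have hsub : F ⊆ mixedSet x y {t | y t ∈ F} := by
    intro u hu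
    rcases hcover u with ⟨t, rfl⟩ | ⟨t, rfl⟩
    · exact mem_union_right _ (mem_image_of_mem x (by simpa using fun hyt => hF hu hyt (hmatch t)))
    · exact mem_union_left _ (mem_image_of_mem y (by simpa using hu))
  exact eq_of_subset_of_card_le hsub ((card_mixedSet_le _).trans hcard)

theorem card_mixedSet_inter (hx : Function.Injective x) (hy : Function.Injective y)
    (hxy : ∀ i j, x i ≠ y j) (S S' : Finset ι) :
    #(mixedSet x y S ∩ mixedSet x y S') = #(S ∩ S') + #((S ∪ S')ᶜ) := by
  have hinter : mixedSet x y S ∩ mixedSet x y S' = (S ∩ S').image y ∪ (S ∪ S')ᶜ.image x := by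
    ext u
    simp only [mixedSet, mem_inter, mem_union, mem_image, mem_compl, not_or]
    constructor
    · rintro ⟨⟨a, ha, rfl⟩ | ⟨a, ha, rfl⟩, ⟨b, hb, hba⟩ | ⟨b, hb, hba⟩⟩
      · exact .inl ⟨a, ⟨ha, hy hba ▸ hb⟩, rfl⟩
      · exact absurd hba (hxy b a)
      · exact absurd hba.symm (hxy a b)
      · exact .inr ⟨a, ⟨ha, hx hba ▸ hb⟩, rfl⟩
    · rintro (⟨a, ⟨ha, ha'⟩, rfl⟩ | ⟨a, ⟨ha, ha'⟩, rfl⟩)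
      · exact ⟨.inl ⟨a, ha, rfl⟩, .inl ⟨a, ha', rfl⟩⟩
      · exact ⟨.inr ⟨a, ha, rfl⟩, .inr ⟨a, ha', rfl⟩⟩
  have hdisj : Disjoint ((S ∩ S').image y) ((S ∪ S')ᶜ.image x) := by
    simp only [disjoint_left, mem_image, not_exists, not_and]
    rintro _ ⟨a, -, rfl⟩ b - hba
    exact hxy b a hba
  rw [hinter, card_union_of_disjoint hdisj, card_image_of_injective _ hy,
    card_image_of_injective _ hx]

theorem mixedSet_image_equiv {κ : Type*} [Fintype κ] [DecidableEq κ] (σ : κ ≃ ι) (P : Finset κ) :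
    mixedSet x y (P.image σ) = P.image (fun t => y (σ t)) ∪ Pᶜ.image (fun t => x (σ t)) := by
  have hcompl : (P.image σ)ᶜ = Pᶜ.image σ := by
    ext a
    obtain ⟨t, rfl⟩ := σ.surjective a
    simp [σ.injective.eq_iff]
  rw [mixedSet, hcompl, image_image, image_image]
  rfl

end MixedSet

theorem labeling_of_bipartite_chain_general {α : Type*} [Fintype α] [DecidableEq α]
    (n : ℕ) (G : SimpleGraph α) (x y : Fin n → α)
    (hx : Function.Injective x) (hy : Function.Injective y)
    (hxy : ∀ i j, x i ≠ y j)
    (hbip : IsBipartition G (Finset.univ.image x) (Finset.univ.image y))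
    (hmatch : ∀ i, G.Adj (x i) (y i))
    (hunmixed : Unmixed G)
    (F : ℕ → Finset α)
    (hF0 : F 0 = Finset.univ.image x)
    (hFn : F n = Finset.univ.image y)
    (hmax : ∀ i ≤ n, MaxIndepSet G (F i))
    (hcard : ∀ i < n, (F i ∩ F (i + 1)).card = n - 1) :
    ∃ σ : Equiv.Perm (Fin n),
      (∀ i ≤ n, F i =
        ((Finset.univ.filter (fun t : Fin n => (t : ℕ) < i)).image (fun t => y (σ t))) ∪
        ((Finset.univ.filter (fun t : Fin n => i ≤ (t : ℕ))).image (fun t => x (σ t)))) ∧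
      ∀ i j, G.Adj (x (σ i)) (y (σ j)) → (i : ℕ) ≤ (j : ℕ) := by
  obtain ⟨-, huniv, -⟩ := hbip
  have hcover (u : α) : (∃ i, x i = u) ∨ ∃ i, y i = u := by simpa using huniv.ge (mem_univ u)
  set S : ℕ → Finset (Fin n) := fun k => {t | y t ∈ F k} with hS
  have hFS (k : ℕ) (hk : k ≤ n) : F k = mixedSet x y (S k) := by
    refine (hmax k hk).1.eq_mixedSet hcover hmatch ?_
    rw [hunmixed (hmax k hk) (hmax 0 n.zero_le), hF0, card_image_of_injective _ hx, card_univ]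
  have hS0 : S 0 = ∅ := by simp [hS, hF0, hxy]
  have hSn : S n = univ := by simp [hS, hFn]
  have hstep (k : ℕ) (hk : k < n) : #(S k ∪ S (k + 1)) ≤ #(S k ∩ S (k + 1)) + 1 := by
    have h := hcard k hk
    rw [hFS k hk.le, hFS (k + 1) hk, card_mixedSet_inter hx hy hxy, card_compl,
      Fintype.card_fin] at h
    have := card_le_univ (S k ∪ S (k + 1))
    rw [Fintype.card_fin] at this
    omega
  obtain ⟨σ, hσ⟩ := exists_equiv_of_chain (Fintype.card_fin n) hS0 hSn hstep
  refine ⟨σ, fun i hi => ?_, fun i j hadj => ?_⟩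
  · rw [hFS i hi, hσ i hi, mixedSet_image_equiv, compl_filter]
    simp only [not_lt]
  · by_contra! hji
    have hj : (j : ℕ) + 1 ≤ n := by omega
    refine (hmax _ hj).1 ?_ ?_ hadj <;> rw [hFS _ hj, hσ _ hj, mixedSet_image_equiv]
    · exact mem_union_right _ (mem_image_of_mem _ (by simpa using hji))
    · exact mem_union_left _ (mem_image_of_mem _ (by simp))

/-- Proposition 1.1, (a) ⇒ (b): if `G` is an unmixed bipartite graph on
`x₁,…,xₙ,y₁,…,yₙ` with `{xᵢ,yᵢ}` an edge for every `i`, and there is a chain of maximal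
independent sets `V = F₀, F₁, …, Fₙ = W` with consecutive intersections of cardinality
`n - 1`, then after a simultaneous relabeling `σ` one has
`Fᵢ = {y_{σ(1)},…,y_{σ(i)}, x_{σ(i+1)},…,x_{σ(n)}}`, and consequently `{x_{σ(i)}, y_{σ(j)}}`
an edge implies `i ≤ j`. -/
theorem labeling_of_bipartite_chain {α : Type*} [Fintype α] [DecidableEq α]
    (n : ℕ) (hn : 1 ≤ n) (G : SimpleGraph α) (x y : Fin n → α)
    (hx : Function.Injective x) (hy : Function.Injective y)
    (hxy : ∀ i j, x i ≠ y j)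
    (hbip : IsBipartition G (Finset.univ.image x) (Finset.univ.image y))
    (hmatch : ∀ i, G.Adj (x i) (y i))
    (hunmixed : Unmixed G)
    (F : ℕ → Finset α)
    (hF0 : F 0 = Finset.univ.image x)
    (hFn : F n = Finset.univ.image y)
    (hmax : ∀ i ≤ n, MaxIndepSet G (F i))
    (hcard : ∀ i < n, (F i ∩ F (i + 1)).card = n - 1) :
    ∃ σ : Equiv.Perm (Fin n),
      (∀ i ≤ n, F i =
        ((Finset.univ.filter (fun t : Fin n => (t : ℕ) < i)).image (fun t => y (σ t))) ∪
        ((Finset.univ.filter (fun t : Fin n => i ≤ (t : ℕ))).image (fun t => x (σ t)))) ∧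
      ∀ i j, G.Adj (x (σ i)) (y (σ j)) → (i : ℕ) ≤ (j : ℕ) :=
  labeling_of_bipartite_chain_general n G x y hx hy hxy hbip hmatch hunmixed F hF0 hFn hmax hcard
end

section
/- Let G be a finite simple graph that is bipartite with bipartition (V₁, V₂), where both V₁ and V₂ are nonempty. Then the complement graph of G is connected if and only if G is not a complete bipartite graph, i.e., if and only if there exist x ∈ V₁ and y ∈ V₂ that are not adjacent in G. -/
namespace IsBipartition

variable {α : Type*} [Fintype α] [DecidableEq α] {G : SimpleGraph α} {V W : Finset α}

theorem symm (h : IsBipartition G V W) : IsBipartition G W V :=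
  ⟨h.1.symm, Finset.union_comm V W ▸ h.2.1, fun _ _ hadj => (h.2.2 hadj).symm⟩

theorem mem_or_mem (h : IsBipartition G V W) (u : α) : u ∈ V ∨ u ∈ W :=
  Finset.mem_union.mp (h.2.1 ▸ Finset.mem_univ u)

theorem not_adj_of_mem_left_s2 (h : IsBipartition G V W) {u v : α} (hu : u ∈ V) (hv : v ∈ V) :
    ¬G.Adj u v := fun hadj => by
  rcases h.2.2 hadj with ⟨-, hvW⟩ | ⟨huW, -⟩
  · exact Finset.disjoint_left.mp h.1 hv hvW
  · exact Finset.disjoint_left.mp h.1 hu huW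

theorem compl_reachable_of_mem_left (h : IsBipartition G V W) {u v : α} (hu : u ∈ V)
    (hv : v ∈ V) : Gᶜ.Reachable u v := by
  by_cases huv : u = v
  · exact huv ▸ SimpleGraph.Reachable.refl u
  · exact SimpleGraph.Adj.reachable ⟨huv, h.not_adj_of_mem_left_s2 hu hv⟩

theorem compl_connected_of_not_adj (h : IsBipartition G V W) {x y : α} (hx : x ∈ V)
    (hy : y ∈ W) (hxy : ¬G.Adj x y) : Gᶜ.Connected := by
  have hxy' : Gᶜ.Adj x y := ⟨fun heq => Finset.disjoint_left.mp h.1 hx (heq ▸ hy), hxy⟩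
  have reach_x : ∀ u, Gᶜ.Reachable u x := fun u => by
    rcases h.mem_or_mem u with hu | hu
    · exact h.compl_reachable_of_mem_left hu hx
    · exact (h.symm.compl_reachable_of_mem_left hu hy).trans hxy'.symm.reachable
  have : Nonempty α := ⟨x⟩
  exact ⟨fun u v => (reach_x u).trans (reach_x v).symm⟩

end IsBipartition

theorem SimpleGraph.Preconnected.exists_adj_mem_not_mem {β : Type*} {H : SimpleGraph β}
    (hH : H.Preconnected) (S : Set β) {u v : β} (hu : u ∈ S) (hv : v ∉ S) :
    ∃ x ∈ S, ∃ y ∉ S, H.Adj x y := by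
  obtain ⟨p⟩ := hH u v
  obtain ⟨d, -, hd⟩ := p.exists_boundary_dart S hu hv
  exact ⟨d.fst, hd.1, d.snd, hd.2, d.adj⟩

/-- Lemma 1.2: a bipartite graph with nonempty parts has connected complement
if and only if it is not a complete bipartite graph, i.e. if and only if some vertex of
`V₁` is not adjacent to some vertex of `V₂`. -/
theorem compl_connected_iff_not_complete_bipartite {α : Type*} [Fintype α] [DecidableEq α]
    (G : SimpleGraph α) (V₁ V₂ : Finset α)
    (hbip : IsBipartition G V₁ V₂) (h₁ : V₁.Nonempty) (h₂ : V₂.Nonempty) :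
    Gᶜ.Connected ↔ ∃ x ∈ V₁, ∃ y ∈ V₂, ¬ G.Adj x y := by
  constructor
  · intro hconn
    obtain ⟨a, ha⟩ := h₁
    obtain ⟨b, hb⟩ := h₂
    have hb₁ : b ∉ (V₁ : Set α) := Finset.disjoint_right.mp hbip.1 hb
    obtain ⟨x, hx, y, hy, hxy⟩ := hconn.preconnected.exists_adj_mem_not_mem (↑V₁) ha hb₁
    exact ⟨x, hx, y, (hbip.mem_or_mem y).resolve_left hy, hxy.2⟩
  · rintro ⟨x, hx, y, hy, hxy⟩
    exact hbip.compl_connected_of_not_adj hx hy hxy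
end

section
/- Let n ≥ 1 and let G be a finite simple graph on the 2n distinct vertices x_1,…,x_n,y_1,…,y_n that is bipartite with bipartition (V, W), where V = {x_1,…,x_n} and W = {y_1,…,y_n}. Assume: {x_i, y_i} is an edge of G for every i; whenever {x_i, y_j} is an edge of G one has i ≤ j; and G is unmixed. Then for all indices i, j, k, if {x_i, y_j} and {x_j, y_k} are edges of G, then {x_i, y_k} is also an edge of G. -/
/-! If `{x i, y k}` were not an edge, extend it to a maximal independent set `S`. Since `x`
enumerates a maximal independent set and `G` is unmixed, `|S| = n`; as `S` meets each matching
edge `{x t, y t}` at most once, it must contain `x j` or `y j`, which is adjacent to `y k` or to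
`x i` respectively. -/

section

variable {α : Type*} {G : SimpleGraph α}

lemma indepSet_pair [DecidableEq α] {a b : α} (hab : ¬ G.Adj a b) : IndepSet G {a, b} := by
  intro u hu v hv huv
  simp only [Finset.mem_insert, Finset.mem_singleton] at hu hv
  rcases hu with rfl | rfl <;> rcases hv with rfl | rfl
  exacts [G.irrefl huv, hab huv, hab huv.symm, G.irrefl huv]

lemma IndepSet.exists_maxIndepSet_superset [Finite α] {A : Finset α} (hA : IndepSet G A) :
    ∃ S, A ⊆ S ∧ MaxIndepSet G S := by
  obtain ⟨S, hAS, hS⟩ := Finite.exists_le_maximal (p := IndepSet G) hA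
  exact ⟨S, hAS, hS.prop, fun T hT hST => (hS.le_of_ge hT hST).antisymm hST⟩

lemma IndepSet.card_inter_pair_le_one [DecidableEq α] {S : Finset α} (hS : IndepSet G S)
    {a b : α} (hab : G.Adj a b) : (S ∩ {a, b}).card ≤ 1 := by
  refine Finset.card_le_one.mpr fun u hu v hv => ?_
  simp only [Finset.mem_inter, Finset.mem_insert, Finset.mem_singleton] at hu hv
  rcases hu with ⟨huS, rfl | rfl⟩ <;> rcases hv with ⟨hvS, rfl | rfl⟩
  exacts [rfl, (hS huS hvS hab).elim, (hS hvS huS hab).elim, rfl]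

/-- An independent set meets each matching edge `{x t, y t}` in at most one vertex, so missing
one edge would leave it fewer than `card ι` vertices. -/
lemma IndepSet.mem_or_mem_of_card_le [DecidableEq α] {ι : Type*} [Fintype ι] {S : Finset α}
    (hS : IndepSet G S) {x y : ι → α} (hmatch : ∀ t, G.Adj (x t) (y t))
    (hcover : ∀ v ∈ S, ∃ t, v = x t ∨ v = y t) (hcard : Fintype.card ι ≤ S.card) (t : ι) :
    x t ∈ S ∨ y t ∈ S := by
  classical
  by_contra! hmiss
  have hsub : S ⊆ (Finset.univ.erase t).biUnion fun s => S ∩ {x s, y s} := by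
    intro v hv
    obtain ⟨s, hs⟩ := hcover v hv
    have hst : s ≠ t := by
      rintro rfl
      rcases hs with rfl | rfl
      exacts [hmiss.1 hv, hmiss.2 hv]
    simp only [Finset.mem_biUnion, Finset.mem_erase, Finset.mem_univ, Finset.mem_inter,
      Finset.mem_insert, Finset.mem_singleton]
    exact ⟨s, ⟨hst, trivial⟩, hv, hs⟩
  have : S.card < Fintype.card ι :=
    calc S.card ≤ ∑ s ∈ Finset.univ.erase t, (S ∩ {x s, y s}).card :=
          (Finset.card_le_card hsub).trans Finset.card_biUnion_le
      _ ≤ ∑ _s ∈ Finset.univ.erase t, 1 :=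
          Finset.sum_le_sum fun s _ => hS.card_inter_pair_le_one (hmatch s)
      _ < Fintype.card ι := by
          simpa using Fintype.card_pos_iff.mpr ⟨t⟩
  omega

lemma IsBipartition.indepSet_left [Fintype α] [DecidableEq α] {V W : Finset α}
    (h : IsBipartition G V W) : IndepSet G V := by
  intro u hu v hv huv
  rcases h.2.2 huv with ⟨-, hvW⟩ | ⟨huW, -⟩
  exacts [Finset.disjoint_left.mp h.1 hv hvW, Finset.disjoint_left.mp h.1 hu huW]

lemma IsBipartition.maxIndepSet_left [Fintype α] [DecidableEq α] {V W : Finset α}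
    (h : IsBipartition G V W) (hW : ∀ w ∈ W, ∃ v ∈ V, G.Adj v w) : MaxIndepSet G V := by
  refine ⟨h.indepSet_left, fun T hT hVT => (Finset.Subset.antisymm ?_ hVT)⟩
  intro w hwT
  have hw : w ∈ V ∪ W := h.2.1 ▸ Finset.mem_univ w
  refine (Finset.mem_union.mp hw).resolve_right fun hwW => ?_
  obtain ⟨v, hv, hvw⟩ := hW w hwW
  exact hT (hVT hv) hwT hvw

end

theorem edge_trans_of_unmixed_bipartite_general {α : Type*} [Fintype α] [DecidableEq α]
    (n : ℕ) (G : SimpleGraph α) (x y : Fin n → α)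
    (hx : Function.Injective x)
    (hbip : IsBipartition G (Finset.univ.image x) (Finset.univ.image y))
    (hmatch : ∀ i, G.Adj (x i) (y i))
    (hunmixed : Unmixed G) :
    ∀ i j k, G.Adj (x i) (y j) → G.Adj (x j) (y k) → G.Adj (x i) (y k) := by
  intro i j k hij hjk
  by_contra hik
  obtain ⟨S, hxyS, hS⟩ := (indepSet_pair hik).exists_maxIndepSet_superset
  have hV : MaxIndepSet G (Finset.univ.image x) :=
    hbip.maxIndepSet_left (by simpa using fun t => ⟨t, hmatch t⟩)
  have hcard : Fintype.card (Fin n) ≤ S.card := by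
    rw [hunmixed hS hV, Finset.card_image_of_injective _ hx, Finset.card_univ]
  have hcover : ∀ v ∈ S, ∃ t, v = x t ∨ v = y t := by
    intro v _
    have hv : v ∈ Finset.univ.image x ∪ Finset.univ.image y := hbip.2.1 ▸ Finset.mem_univ v
    simpa [eq_comm, exists_or] using hv
  rcases hS.1.mem_or_mem_of_card_le hmatch hcover hcard j with hxj | hyj
  · exact hS.1 hxj (hxyS (by simp)) hjk
  · exact hS.1 (hxyS (by simp)) hyj hij

/-- The key combinatorial claim in the proof of (a) ⇒ (b) of Theorem 1.3: if `G` is an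
unmixed bipartite graph on `x₁,…,xₙ,y₁,…,yₙ` with `{xᵢ,yᵢ}` an edge for every `i` and
`{xᵢ,yⱼ}` an edge implying `i ≤ j`, then `{xᵢ,yⱼ}` and `{xⱼ,y_k}` being edges implies
that `{xᵢ,y_k}` is an edge. -/
theorem edge_trans_of_unmixed_bipartite {α : Type*} [Fintype α] [DecidableEq α]
    (n : ℕ) (hn : 1 ≤ n) (G : SimpleGraph α) (x y : Fin n → α)
    (hx : Function.Injective x) (hy : Function.Injective y)
    (hxy : ∀ i j, x i ≠ y j)
    (hbip : IsBipartition G (Finset.univ.image x) (Finset.univ.image y))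
    (hmatch : ∀ i, G.Adj (x i) (y i))
    (hle : ∀ i j, G.Adj (x i) (y j) → (i : ℕ) ≤ (j : ℕ))
    (hunmixed : Unmixed G) :
    ∀ i j k, G.Adj (x i) (y j) → G.Adj (x j) (y k) → G.Adj (x i) (y k) :=
  edge_trans_of_unmixed_bipartite_general n G x y hx hbip hmatch hunmixed
end

section
/- Let G be a finite simple graph that is bipartite with bipartition (V, W), with |V| = |W| = n ≥ 1, and suppose there exist maximal independent sets F_0 = V, F_1, …, F_n = W of G with |F_i ∩ F_{i+1}| = n − 1 for every i. Let G₁ be the graph obtained from G by adding two new vertices x' and y' and the single new edge {x', y'}. Then G₁ is bipartite with bipartition (V ∪ {x'}, W ∪ {y'}) and there exist maximal independent sets F'_0 = V ∪ {x'}, F'_1, …, F'_{n+1} = W ∪ {y'} of G₁ with |F'_i ∩ F'_{i+1}| = n for every i = 0,…,n; indeed one may take F'_i = F_i ∪ {x'} for i = 0,…,n and F'_{n+1} = F_n ∪ {y'}. -/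
/-! Adding a disjoint edge means passing from `G` to the disjoint sum `G ⊕g K₂`. Independent
sets, maximality, bipartitions and intersections of finsets all split componentwise over a
disjoint sum, and the singletons `{x'}`, `{y'}` are the maximal independent sets of `K₂`; so the
chain for `G` paired with `{x'}`, followed by `W` paired with `{y'}`, is the required chain. -/

open Finset

namespace Finset

variable {α β : Type*} [DecidableEq α] [DecidableEq β]

lemma disjSum_inter_disjSum (s s' : Finset α) (t t' : Finset β) :
    s.disjSum t ∩ s'.disjSum t' = (s ∩ s').disjSum (t ∩ t') := by
  ext (x | x) <;> simp

lemma disjSum_union_disjSum (s s' : Finset α) (t t' : Finset β) :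
    s.disjSum t ∪ s'.disjSum t' = (s ∪ s').disjSum (t ∪ t') := by
  ext (x | x) <;> simp

lemma disjoint_disjSum_disjSum {s s' : Finset α} {t t' : Finset β}
    (hs : Disjoint s s') (ht : Disjoint t t') : Disjoint (s.disjSum t) (s'.disjSum t') := by
  rw [disjoint_iff_inter_eq_empty, disjSum_inter_disjSum, disjSum_eq_empty]
  exact ⟨disjoint_iff_inter_eq_empty.1 hs, disjoint_iff_inter_eq_empty.1 ht⟩

lemma image_inl_union_singleton_inr (s : Finset α) (b : β) :
    s.image Sum.inl ∪ {Sum.inr b} = s.disjSum {b} := by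
  ext (x | x) <;> simp

end Finset

namespace SimpleGraph

variable {α β : Type*} {G : SimpleGraph α} {H : SimpleGraph β}

lemma indepSet_sum_disjSum {S : Finset α} {T : Finset β} :
    IndepSet (G ⊕g H) (S.disjSum T) ↔ IndepSet G S ∧ IndepSet H T := by
  refine ⟨fun h => ⟨fun u hu v hv => ?_, fun u hu v hv => ?_⟩, fun ⟨hS, hT⟩ => ?_⟩
  · simpa using h (inl_mem_disjSum.2 hu) (inl_mem_disjSum.2 hv)
  · simpa using h (inr_mem_disjSum.2 hu) (inr_mem_disjSum.2 hv)
  · rintro (u | u) hu (v | v) hv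
    · rw [sum_adj_inl]; exact hS (inl_mem_disjSum.1 hu) (inl_mem_disjSum.1 hv)
    · exact not_adj_sum_inl_inr u v
    · exact fun h => not_adj_sum_inl_inr v u h.symm
    · rw [sum_adj_inr]; exact hT (inr_mem_disjSum.1 hu) (inr_mem_disjSum.1 hv)

lemma maxIndepSet_sum_disjSum {S : Finset α} {T : Finset β}
    (hS : MaxIndepSet G S) (hT : MaxIndepSet H T) : MaxIndepSet (G ⊕g H) (S.disjSum T) := by
  refine ⟨indepSet_sum_disjSum.2 ⟨hS.1, hT.1⟩, fun U hU hSU => ?_⟩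
  rw [← toLeft_disjSum_toRight (u := U)] at hU ⊢
  obtain ⟨hSU, hTU⟩ := disjSum_subset.1 (toLeft_disjSum_toRight (u := U) ▸ hSU)
  obtain ⟨hUl, hUr⟩ := indepSet_sum_disjSum.1 hU
  rw [hS.2 hUl (by simpa using hSU), hT.2 hUr (by simpa using hTU)]

lemma maxIndepSet_top_singleton (b : β) : MaxIndepSet (⊤ : SimpleGraph β) {b} := by
  refine ⟨by simp [IndepSet], fun T hT hbT => ?_⟩
  have hb : b ∈ T := hbT (mem_singleton_self b)
  refine eq_singleton_iff_unique_mem.2 ⟨hb, fun c hc => ?_⟩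
  by_contra hcb
  exact hT hc hb ((top_adj c b).2 hcb)

lemma isBipartition_sum [Fintype α] [DecidableEq α] [Fintype β] [DecidableEq β]
    {V W : Finset α} {X Y : Finset β} (hG : IsBipartition G V W) (hH : IsBipartition H X Y) :
    IsBipartition (G ⊕g H) (V.disjSum X) (W.disjSum Y) := by
  obtain ⟨hVW, hunivG, hadjG⟩ := hG
  obtain ⟨hXY, hunivH, hadjH⟩ := hH
  refine ⟨disjoint_disjSum_disjSum hVW hXY,
    by rw [disjSum_union_disjSum, hunivG, hunivH, univ_disjSum_univ], ?_⟩
  rintro (u | u) (v | v) h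
  · simpa using hadjG (sum_adj_inl.1 h)
  · exact absurd h (not_adj_sum_inl_inr u v)
  · exact absurd h.symm (not_adj_sum_inl_inr v u)
  · simpa using hadjH (sum_adj_inr.1 h)

lemma isBipartition_top_bool : IsBipartition (⊤ : SimpleGraph Bool) {false} {true} := by
  refine ⟨by simp, by decide, ?_⟩
  rintro (_ | _) (_ | _) h <;> simp_all

end SimpleGraph

open SimpleGraph

theorem chain_of_add_disjoint_edge_general {α : Type*} [Fintype α] [DecidableEq α]
    (G : SimpleGraph α) (V W : Finset α) (n : ℕ)
    (hbip : IsBipartition G V W) (hW : W.card = n)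
    (F : ℕ → Finset α)
    (hF0 : F 0 = V) (hFn : F n = W)
    (hmax : ∀ i ≤ n, MaxIndepSet G (F i))
    (hcard : ∀ i < n, (F i ∩ F (i + 1)).card = n - 1)
    (G₁ : SimpleGraph (α ⊕ Bool))
    (hG₁ : ∀ u v : α ⊕ Bool, G₁.Adj u v ↔
      ((∃ a b : α, u = Sum.inl a ∧ v = Sum.inl b ∧ G.Adj a b) ∨
       (u = Sum.inr false ∧ v = Sum.inr true) ∨
       (u = Sum.inr true ∧ v = Sum.inr false)))
    (F' : ℕ → Finset (α ⊕ Bool))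
    (hF' : ∀ i ≤ n, F' i = (F i).image Sum.inl ∪ {Sum.inr false})
    (hF'top : F' (n + 1) = (F n).image Sum.inl ∪ {Sum.inr true}) :
    IsBipartition G₁ (V.image Sum.inl ∪ {Sum.inr false}) (W.image Sum.inl ∪ {Sum.inr true}) ∧
    F' 0 = V.image Sum.inl ∪ {Sum.inr false} ∧
    F' (n + 1) = W.image Sum.inl ∪ {Sum.inr true} ∧
    (∀ i ≤ n + 1, MaxIndepSet G₁ (F' i)) ∧
    ∀ i ≤ n, (F' i ∩ F' (i + 1)).card = n := by
  have hG₁_eq : G₁ = G ⊕g ⊤ := by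
    ext (u | u) (v | v)
    case inr.inr => cases u <;> cases v <;> simp [hG₁]
    all_goals simp [hG₁]
  subst hG₁_eq
  simp only [image_inl_union_singleton_inr] at hF' hF'top ⊢
  refine ⟨isBipartition_sum hbip isBipartition_top_bool, by rw [hF' 0 n.zero_le, hF0],
    by rw [hF'top, hFn], fun i hi => ?_, fun i hi => ?_⟩
  · rcases hi.lt_or_eq with hi | rfl
    · rw [hF' i (Nat.lt_succ_iff.1 hi)]
      exact maxIndepSet_sum_disjSum (hmax i (Nat.lt_succ_iff.1 hi)) (maxIndepSet_top_singleton _)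
    · rw [hF'top]
      exact maxIndepSet_sum_disjSum (hmax n le_rfl) (maxIndepSet_top_singleton _)
  · rcases hi.lt_or_eq with hi | rfl
    · rw [hF' i hi.le, hF' (i + 1) hi, disjSum_inter_disjSum, card_disjSum, hcard i hi, inter_self,
        card_singleton]
      omega
    · rw [hF' i le_rfl, hF'top, disjSum_inter_disjSum, card_disjSum, hFn, inter_self, hW]
      simp

/-- Remark 1.10 (converse construction): let `G` be bipartite with bipartition `(V, W)`,
`|V| = |W| = n`, carrying a chain of maximal independent sets `V = F₀, …, Fₙ = W` with
consecutive intersections of cardinality `n - 1`. Let `G₁` be obtained from `G` by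
adding the two new vertices `x' = Sum.inr false`, `y' = Sum.inr true` and the single new
edge `{x', y'}`. Then `G₁` is bipartite with bipartition `(V ∪ {x'}, W ∪ {y'})` and the
sets `F'ᵢ = Fᵢ ∪ {x'}` (for `i ≤ n`) and `F'_{n+1} = Fₙ ∪ {y'}` form a chain of maximal
independent sets from `V ∪ {x'}` to `W ∪ {y'}` with consecutive intersections of
cardinality `n`. -/
theorem chain_of_add_disjoint_edge {α : Type*} [Fintype α] [DecidableEq α]
    (G : SimpleGraph α) (V W : Finset α) (n : ℕ) (hn : 1 ≤ n)
    (hbip : IsBipartition G V W) (hV : V.card = n) (hW : W.card = n)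
    (F : ℕ → Finset α)
    (hF0 : F 0 = V) (hFn : F n = W)
    (hmax : ∀ i ≤ n, MaxIndepSet G (F i))
    (hcard : ∀ i < n, (F i ∩ F (i + 1)).card = n - 1)
    (G₁ : SimpleGraph (α ⊕ Bool))
    (hG₁ : ∀ u v : α ⊕ Bool, G₁.Adj u v ↔
      ((∃ a b : α, u = Sum.inl a ∧ v = Sum.inl b ∧ G.Adj a b) ∨
       (u = Sum.inr false ∧ v = Sum.inr true) ∨
       (u = Sum.inr true ∧ v = Sum.inr false)))
    (F' : ℕ → Finset (α ⊕ Bool))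
    (hF' : ∀ i ≤ n, F' i = (F i).image Sum.inl ∪ {Sum.inr false})
    (hF'top : F' (n + 1) = (F n).image Sum.inl ∪ {Sum.inr true}) :
    IsBipartition G₁ (V.image Sum.inl ∪ {Sum.inr false}) (W.image Sum.inl ∪ {Sum.inr true}) ∧
    F' 0 = V.image Sum.inl ∪ {Sum.inr false} ∧
    F' (n + 1) = W.image Sum.inl ∪ {Sum.inr true} ∧
    (∀ i ≤ n + 1, MaxIndepSet G₁ (F' i)) ∧
    ∀ i ≤ n, (F' i ∩ F' (i + 1)).card = n :=
  chain_of_add_disjoint_edge_general G V W n hbip hW F hF0 hFn hmax hcard G₁ hG₁ F' hF' hF'top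
end

section
/- For every n ≥ 3, the cycle graph C_n on n vertices is unmixed (all maximal independent sets of C_n have the same cardinality) if and only if n ∈ {3, 4, 5, 7}. -/
open Finset SimpleGraph

theorem maxIndepSet_iff_forall_exists_adj {α : Type*} {G : SimpleGraph α} {S : Finset α} :
    MaxIndepSet G S ↔ IndepSet G S ∧ ∀ w ∉ S, ∃ x ∈ S, G.Adj x w := by
  classical
  refine ⟨fun ⟨hS, hmax⟩ => ⟨hS, fun w hw => ?_⟩, fun ⟨hS, hdom⟩ => ⟨hS, fun T hT hST => ?_⟩⟩
  · by_contra! hfree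
    have hins : IndepSet G (insert w S) := by
      intro u hu v hv
      rcases mem_insert.1 hu with rfl | huS <;> rcases mem_insert.1 hv with rfl | hvS
      · exact G.irrefl
      · exact fun h => hfree v hvS h.symm
      · exact hfree u huS
      · exact hS huS hvS
    exact hw (hmax hins (subset_insert w S) ▸ mem_insert_self w S)
  · refine (hST.antisymm fun w hwT => ?_).symm
    by_contra hw
    obtain ⟨x, hx, hxw⟩ := hdom w hw
    exact hT (hST hx) hwT hxw

def alternateVertices (n : ℕ) : Finset (Fin n) :=
  {i | i.val % 2 = 0 ∧ i.val + 1 < n}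

/-- When `n ≡ 1 [MOD 3]` the last vertex has no neighbour `≡ 1 [MOD 3]`, so it is added. -/
def everyThirdVertex (n : ℕ) : Finset (Fin n) :=
  {i | i.val % 3 = 1 ∨ (i.val + 1 = n ∧ n % 3 = 1)}

theorem div_two_le_card_alternateVertices (n : ℕ) : n / 2 ≤ (alternateVertices n).card := by
  refine (card_range _).symm.trans_le (card_le_card_of_surjOn (fun i => i.val / 2) fun j hj => ?_)
  have hj : j < n / 2 := mem_range.1 hj
  refine ⟨⟨2 * j, by omega⟩, ?_, by show 2 * j / 2 = j; omega⟩
  simp only [alternateVertices, coe_filter, mem_univ, true_and, Set.mem_ofPred_eq]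
  omega

theorem three_mul_card_everyThirdVertex_le (n : ℕ) : 3 * (everyThirdVertex n).card ≤ n + 2 := by
  have : (everyThirdVertex n).card ≤ (range ((n + 2) / 3)).card := by
    refine card_le_card_of_injOn (fun i => i.val / 3) (fun i _ => ?_) fun i hi j hj hij => ?_
    · simp only [coe_range, Set.mem_Iio]; omega
    · simp only [everyThirdVertex, coe_filter, mem_univ, true_and, Set.mem_ofPred_eq] at hi hj hij
      exact Fin.ext (by omega)
  rw [card_range] at this
  omega

namespace SimpleGraph

variable {n : ℕ}

theorem cycleGraph_adj_iff_val {u v : Fin (n + 2)} :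
    (cycleGraph (n + 2)).Adj u v ↔ u.val + 1 = v.val ∨ v.val + 1 = u.val ∨
      (u.val = n + 1 ∧ v.val = 0) ∨ (v.val = n + 1 ∧ u.val = 0) := by
  have hsub (a b : Fin (n + 2)) :
      (a - b).val = 1 ↔ a.val = b.val + 1 ∨ (a.val = 0 ∧ b.val = n + 1) := by
    rcases le_or_gt b a with h | h
    · rw [Fin.coe_sub_iff_le.2 h]; rw [Fin.le_def] at h; omega
    · rw [Fin.coe_sub_iff_lt.2 h]; rw [Fin.lt_def] at h; omega
  rw [cycleGraph_adj', hsub, hsub]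
  omega

theorem two_mul_card_le_of_indepSet {S : Finset (Fin (n + 2))}
    (hS : IndepSet (cycleGraph (n + 2)) S) : 2 * S.card ≤ n + 2 := by
  have hdisj : Disjoint S (S.image (· + 1)) := by
    refine Finset.disjoint_left.2 fun v hv hv' => ?_
    obtain ⟨u, hu, rfl⟩ := mem_image.1 hv'
    exact hS hu hv (cycleGraph_adj.2 (Or.inr (add_sub_cancel_left u 1)))
  calc 2 * S.card = (S ∪ S.image (· + 1)).card := by
        rw [card_union_of_disjoint hdisj, card_image_of_injective _ (add_left_injective 1), two_mul]
    _ ≤ n + 2 := (card_le_univ _).trans_eq (Fintype.card_fin _)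

theorem le_three_mul_card_of_maxIndepSet {S : Finset (Fin (n + 2))}
    (hS : MaxIndepSet (cycleGraph (n + 2)) S) : n + 2 ≤ 3 * S.card := by
  have hcover : univ ⊆ S ∪ S.image (· + 1) ∪ S.image (· - 1) := by
    intro w _
    by_cases hw : w ∈ S
    · exact mem_union_left _ (mem_union_left _ hw)
    obtain ⟨x, hx, hxw⟩ := (maxIndepSet_iff_forall_exists_adj.1 hS).2 w hw
    rcases cycleGraph_adj.1 hxw with h | h
    · exact mem_union_right _ (mem_image.2 ⟨x, hx, by rw [← h, sub_sub_cancel]⟩)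
    · exact mem_union_left _ (mem_union_right _ (mem_image.2 ⟨x, hx, by rw [← h, add_sub_cancel]⟩))
  calc n + 2 = (univ : Finset (Fin (n + 2))).card := (card_fin _).symm
    _ ≤ (S ∪ S.image (· + 1) ∪ S.image (· - 1)).card := card_le_card hcover
    _ ≤ S.card + S.card + S.card :=
        (card_union_le _ _).trans (add_le_add ((card_union_le _ _).trans
          (add_le_add_right card_image_le _)) card_image_le)
    _ = 3 * S.card := by ring

theorem maxIndepSet_alternateVertices (n : ℕ) :
    MaxIndepSet (cycleGraph (n + 2)) (alternateVertices (n + 2)) := by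
  simp only [maxIndepSet_iff_forall_exists_adj, IndepSet, alternateVertices, mem_filter, mem_univ,
    true_and, cycleGraph_adj_iff_val, Fin.exists_iff]
  refine ⟨fun u hu v hv => by omega, fun w hw => ?_⟩
  by_cases hodd : w.val % 2 = 1
  · exact ⟨w.val - 1, by omega, by omega, by omega⟩
  · exact ⟨0, by omega, by omega, by omega⟩

theorem maxIndepSet_everyThirdVertex (n : ℕ) :
    MaxIndepSet (cycleGraph (n + 2)) (everyThirdVertex (n + 2)) := by
  simp only [maxIndepSet_iff_forall_exists_adj, IndepSet, everyThirdVertex, mem_filter, mem_univ,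
    true_and, cycleGraph_adj_iff_val, Fin.exists_iff]
  refine ⟨fun u hu v hv => by omega, fun w hw => ?_⟩
  by_cases hrem : w.val % 3 = 2
  · exact ⟨w.val - 1, by omega, by omega, by omega⟩
  · exact ⟨w.val + 1, by omega, by omega, by omega⟩

end SimpleGraph

/-- For `n ≥ 3`, the cycle graph `Cₙ` is unmixed if and only if `n ∈ {3, 4, 5, 7}`. -/
theorem cycleGraph_unmixed_iff (n : ℕ) (hn : 3 ≤ n) :
    Unmixed (SimpleGraph.cycleGraph n) ↔ n = 3 ∨ n = 4 ∨ n = 5 ∨ n = 7 := by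
  obtain ⟨m, rfl⟩ : ∃ m, n = m + 2 := ⟨n - 2, by omega⟩
  constructor
  · intro h
    have hcard := h (maxIndepSet_alternateVertices m) (maxIndepSet_everyThirdVertex m)
    have hbig := div_two_le_card_alternateVertices (m + 2)
    have hsmall := three_mul_card_everyThirdVertex_le (m + 2)
    omega
  · intro hm S T hS hT
    have hS_le := two_mul_card_le_of_indepSet hS.1
    have hT_le := two_mul_card_le_of_indepSet hT.1
    have hS_ge := le_three_mul_card_of_maxIndepSet hS
    have hT_ge := le_three_mul_card_of_maxIndepSet hT
    omega
end

section
/- Let G be the cycle graph C_7 on 7 vertices and let F be any independent set of G with |F| ≤ 1. Define the link graph L_F as follows: its vertices are the vertices v ∉ F of G such that F ∪ {v} is an independent set of G, and two distinct such vertices u, w are adjacent in L_F exactly when F ∪ {u, w} is an independent set of G. Then L_F is a connected graph. -/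
def linkGraph {α : Type*} [DecidableEq α] (G : SimpleGraph α) (F : Finset α) :
    SimpleGraph {v : α // v ∉ F ∧ IndepSet G (insert v F)} where
  Adj u w := u ≠ w ∧ IndepSet G (insert u.1 (insert w.1 F))
  symm := by
    constructor
    rintro u w ⟨h1, h2⟩
    exact ⟨h1.symm, by rwa [Finset.insert_comm]⟩
  loopless := ⟨fun u h => h.1 rfl⟩

open SimpleGraph

instance {α : Type*} (G : SimpleGraph α) [DecidableRel G.Adj] (S : Finset α) :
    Decidable (IndepSet G S) :=
  decidable_of_iff (∀ u ∈ S, ∀ v ∈ S, ¬ G.Adj u v) Iff.rfl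

instance {α : Type*} [DecidableEq α] (G : SimpleGraph α) [DecidableRel G.Adj] (F : Finset α) :
    DecidableRel (linkGraph G F).Adj := fun u w =>
  show Decidable (u ≠ w ∧ IndepSet G (insert u.1 (insert w.1 F))) from inferInstance

section Iso

variable {α β : Type*} {G : SimpleGraph α} {H : SimpleGraph β}

theorem indepSet_map_iff (e : G ≃g H) (S : Finset α) :
    IndepSet H (S.map e.toEquiv.toEmbedding) ↔ IndepSet G S := by
  simp only [IndepSet, Finset.forall_mem_map]
  exact forall₂_congr fun u _ => forall₂_congr fun v _ => not_congr e.map_adj_iff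

variable [DecidableEq α] [DecidableEq β]

def linkGraphIso (e : G ≃g H) (F : Finset α) :
    linkGraph G F ≃g linkGraph H (F.map e.toEquiv.toEmbedding) where
  toEquiv := e.toEquiv.subtypeEquiv fun v => by
    rw [← indepSet_map_iff e, Finset.map_insert, ← Finset.mem_map' e.toEquiv.toEmbedding]
    rfl
  map_rel_iff' := by
    simp only [_root_.linkGraph, ← indepSet_map_iff e, Finset.map_insert]
    simp [Subtype.ext_iff]

end Iso

def cycleGraph.rotate {n : ℕ} [NeZero n] (k : Fin n) : cycleGraph n ≃g cycleGraph n where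
  toEquiv := Equiv.addRight k
  map_rel_iff' := by simp [cycleGraph_adj']

theorem linkGraph_cycleGraph_seven_empty_connected :
    (linkGraph (cycleGraph 7) ∅).Connected :=
  connected_iff _ |>.mpr ⟨by decide, ⟨⟨0, by decide⟩⟩⟩

theorem linkGraph_cycleGraph_seven_singleton_zero_connected :
    (linkGraph (cycleGraph 7) {0}).Connected :=
  connected_iff _ |>.mpr ⟨by decide, ⟨⟨2, by decide⟩⟩⟩

theorem cycleGraph_seven_link_connected_general
    (F : Finset (Fin 7))
    (hcard : F.card ≤ 1) :
    (linkGraph (SimpleGraph.cycleGraph 7) F).Connected := by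
  obtain hF | hF := Nat.le_one_iff_eq_zero_or_eq_one.mp hcard
  · rw [Finset.card_eq_zero.mp hF]
    exact linkGraph_cycleGraph_seven_empty_connected
  obtain ⟨a, rfl⟩ := Finset.card_eq_one.mp hF
  have hrot : ({a} : Finset (Fin 7)).map (cycleGraph.rotate (-a)).toEquiv.toEmbedding = {0} := by
    simp [cycleGraph.rotate]
  have e := linkGraphIso (cycleGraph.rotate (-a)) {a}
  rw [hrot] at e
  exact e.connected_iff.mpr linkGraph_cycleGraph_seven_singleton_zero_connected

/-- Proposition 1.6 (cohomological criterion for `S₂`): for every independent set `F`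
of the cycle graph `C₇` with `|F| ≤ 1`, the link graph of `F` is connected. -/
theorem cycleGraph_seven_link_connected
    (F : Finset (Fin 7)) (hF : IndepSet (SimpleGraph.cycleGraph 7) F)
    (hcard : F.card ≤ 1) :
    (linkGraph (SimpleGraph.cycleGraph 7) F).Connected :=
  cycleGraph_seven_link_connected_general F hcard
end
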